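/- The function g(r) = (r·coth(r) − 1)/r² is strictly decreasing on (0,∞). -/

import Mathlib

/-!
The derivative of `g` is `(2 sinh² r - r sinh r cosh r - r²) / (r³ sinh² r)`, so it suffices that
`2 sinh² r < r² + r sinh r cosh r`, which for `t = 2r` reads `4 cosh t < 4 + t² + t sinh t`.
This is the last link of the chain
`0 < t sinh t`, `sinh t < t cosh t`, `2 cosh t < 2 + t sinh t`, `3 sinh t < 2t + t cosh t`,
`4 cosh t < 4 + t² + t sinh t`: in each link the difference of the two sides vanishes at `0` and
its derivative is the difference in the previous link.
-/

open Real

lemma pos_of_hasDerivAt_pos {f f' : ℝ → ℝ} {a x : ℝ} (hf : ∀ y, a ≤ y → HasDerivAt f (f' y) y)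
    (hfa : f a = 0) (hf' : ∀ y, a < y → 0 < f' y) (hx : a < x) : 0 < f x := by
  have hmono : StrictMonoOn f (Set.Ici a) :=
    strictMonoOn_of_hasDerivWithinAt_pos (convex_Ici a)
      (fun y hy => (hf y hy).continuousAt.continuousWithinAt)
      (fun y hy => by rw [interior_Ici] at hy; exact (hf y hy.le).hasDerivWithinAt)
      (fun y hy => by rw [interior_Ici] at hy; exact hf' y hy)
  simpa [hfa] using hmono Set.self_mem_Ici hx.le hx

lemma sinh_lt_mul_cosh {x : ℝ} (hx : 0 < x) : sinh x < x * cosh x := by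
  refine sub_pos.1 <| pos_of_hasDerivAt_pos (f := fun x => x * cosh x - sinh x)
    (f' := fun x => x * sinh x) (fun y _ => ?_) (by simp)
    (fun y hy => mul_pos hy (sinh_pos_iff.2 hy)) hx
  exact ((hasDerivAt_id' (x := y)).fun_mul (hasDerivAt_cosh y)).sub (hasDerivAt_sinh y)
    |>.congr_deriv (by ring)

lemma two_mul_cosh_lt {x : ℝ} (hx : 0 < x) : 2 * cosh x < 2 + x * sinh x := by
  refine sub_pos.1 <| pos_of_hasDerivAt_pos (f := fun x => 2 + x * sinh x - 2 * cosh x)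
    (f' := fun x => x * cosh x - sinh x) (fun y _ => ?_) (by simp)
    (fun y hy => sub_pos.2 (sinh_lt_mul_cosh hy)) hx
  exact (((hasDerivAt_id' (x := y)).fun_mul (hasDerivAt_sinh y)).const_add 2).sub
    ((hasDerivAt_cosh y).const_mul 2) |>.congr_deriv (by ring)

lemma three_mul_sinh_lt {x : ℝ} (hx : 0 < x) : 3 * sinh x < 2 * x + x * cosh x := by
  refine sub_pos.1 <| pos_of_hasDerivAt_pos (f := fun x => 2 * x + x * cosh x - 3 * sinh x)
    (f' := fun x => 2 + x * sinh x - 2 * cosh x) (fun y _ => ?_) (by simp)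
    (fun y hy => sub_pos.2 (two_mul_cosh_lt hy)) hx
  exact (((hasDerivAt_id' (x := y)).const_mul 2).add
    ((hasDerivAt_id' (x := y)).fun_mul (hasDerivAt_cosh y))).sub
    ((hasDerivAt_sinh y).const_mul 3) |>.congr_deriv (by ring)

lemma four_mul_cosh_lt {x : ℝ} (hx : 0 < x) : 4 * cosh x < 4 + x ^ 2 + x * sinh x := by
  refine sub_pos.1 <| pos_of_hasDerivAt_pos (f := fun x => 4 + x ^ 2 + x * sinh x - 4 * cosh x)
    (f' := fun x => 2 * x + x * cosh x - 3 * sinh x) (fun y _ => ?_) (by simp)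
    (fun y hy => sub_pos.2 (three_mul_sinh_lt hy)) hx
  exact (((hasDerivAt_pow 2 y).const_add 4).add
    ((hasDerivAt_id' (x := y)).fun_mul (hasDerivAt_sinh y))).sub
    ((hasDerivAt_cosh y).const_mul 4) |>.congr_deriv (by ring)

lemma two_mul_sinh_sq_lt {x : ℝ} (hx : 0 < x) :
    2 * sinh x ^ 2 < x ^ 2 + x * sinh x * cosh x := by
  have h := four_mul_cosh_lt (mul_pos two_pos hx)
  rw [cosh_two_mul, sinh_two_mul, cosh_sq] at h
  linarith

lemma hasDerivAt_mul_coth_sub_one_div_sq {r : ℝ} (hr : r ≠ 0) :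
    HasDerivAt (fun r => (r * (cosh r / sinh r) - 1) / r ^ 2)
      ((2 * sinh r ^ 2 - r * sinh r * cosh r - r ^ 2) / (r ^ 3 * sinh r ^ 2)) r := by
  have hs : sinh r ≠ 0 := sinh_ne_zero.2 hr
  refine ((((hasDerivAt_id' (x := r)).fun_mul
    ((hasDerivAt_cosh r).fun_div (hasDerivAt_sinh r) hs)).sub_const 1).fun_div
    (hasDerivAt_pow 2 r) (pow_ne_zero 2 hr)).congr_deriv ?_
  field_simp
  rw [cosh_sq]
  ring

theorem g_strictAnti :
    StrictAntiOn (fun r : ℝ => (r * (Real.cosh r / Real.sinh r) - 1) / r ^ 2)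
      (Set.Ioi (0 : ℝ)) := by
  have hg (r : ℝ) (hr : 0 < r) := hasDerivAt_mul_coth_sub_one_div_sq hr.ne'
  refine strictAntiOn_of_hasDerivWithinAt_neg (convex_Ioi 0)
    (f' := fun r => (2 * sinh r ^ 2 - r * sinh r * cosh r - r ^ 2) / (r ^ 3 * sinh r ^ 2))
    (fun r hr => (hg r hr).continuousAt.continuousWithinAt)
    (fun r hr => ?_) (fun r hr => ?_) <;> rw [interior_Ioi, Set.mem_Ioi] at hr
  · exact (hg r hr).hasDerivWithinAt
  · have hs : 0 < sinh r := sinh_pos_iff.2 hr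
    exact div_neg_of_neg_of_pos (by linarith [two_mul_sinh_sq_lt hr]) (by positivity)
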